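/- The map (w_1, w_2) ↦ w_1 · w_2^{-1} (concatenation of w_1 with the reversed-complemented w_2) is a bijection from the set of ordered pairs of Catalan half-words of length n having the same number of 1s, onto the set CW_n of Catalan words of length 2n. -/

import Mathlib

/-- Reversal with 0/1 exchanged: the "inverse" of a 01-word (here `true` = 1, `false` = 0). -/
def inv01 (w : List Bool) : List Bool := w.reverse.map (fun b => !b)

/-- Descent set of a 01-word, as 0-based indices `i` (the 1-based position is `i+1`)
with `x_{i+1} = 1` and `x_{i+2} = 0`. -/
def desSet (w : List Bool) : Finset ℕ :=
  (Finset.range (w.length - 1)).filter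
    (fun i => w.getD i false = true ∧ w.getD (i + 1) false = false)

/-- Major index of a 01-word: sum of the (1-based) positions of descents. -/
def maj (w : List Bool) : ℕ := ∑ i ∈ desSet w, (i + 1)

/-- No initial segment has more 1s than 0s. -/
def IsHalfWord (w : List Bool) : Prop :=
  ∀ m : ℕ, (w.take m).count true ≤ (w.take m).count false

/-- A Catalan word of length `2n`: exactly `n` ones and no initial segment with more 1s than 0s. -/
def IsCatalanWord (n : ℕ) (w : List Bool) : Prop :=
  w.length = 2 * n ∧ w.count true = n ∧ IsHalfWord w

/-!
A prefix of `w₁ · w₂⁻¹` longer than `w₁` is `w₁ · s⁻¹` for a suffix `s` of `w₂`. When `w₁` and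
`w₂` have the same letter counts, the excess of 1s over 0s in `w₁ · s⁻¹` equals the excess in
the complementary prefix of `w₂`. Hence `w₁ · w₂⁻¹` is a half-word exactly when both `w₁` and
`w₂` are, and the inverse map cuts a Catalan word of length `2n` in the middle.
-/

lemma List.count_take_add_count_drop {α : Type*} [BEq α] (l : List α) (a : α) (m : ℕ) :
    (l.take m).count a + (l.drop m).count a = l.count a := by
  rw [← List.count_append, List.take_append_drop]

lemma length_inv01 (w : List Bool) : (inv01 w).length = w.length := by
  simp [inv01]

lemma count_inv01 (w : List Bool) (b : Bool) : (inv01 w).count b = w.count (!b) := by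
  induction w with
  | nil => rfl
  | cons a t ih => cases a <;> cases b <;> simp_all [inv01]

lemma inv01_inv01 (w : List Bool) : inv01 (inv01 w) = w := by
  simp [inv01, List.map_reverse, Function.comp_def]

lemma inv01_injective : Function.Injective inv01 :=
  Function.LeftInverse.injective inv01_inv01

lemma take_inv01 (w : List Bool) (m : ℕ) :
    (inv01 w).take m = inv01 (w.drop (w.length - m)) := by
  rw [inv01, ← List.map_take, List.take_reverse, inv01]

lemma isHalfWord_iff_take_length_sub (w : List Bool) :
    IsHalfWord w ↔
      ∀ m, (w.take (w.length - m)).count true ≤ (w.take (w.length - m)).count false := by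
  refine ⟨fun h m => h _, fun h j => ?_⟩
  have := h (w.length - j)
  rwa [show w.length - (w.length - j) = min j w.length by omega, ← List.take_eq_take_min] at this

lemma isHalfWord_append_iff (u x : List Bool) :
    IsHalfWord (u ++ x) ↔ IsHalfWord u ∧
      ∀ m, u.count true + (x.take m).count true ≤ u.count false + (x.take m).count false := by
  simp only [IsHalfWord, List.take_append, List.count_append]
  refine ⟨fun h => ⟨fun m => ?_, fun m => ?_⟩, fun ⟨hu, hx⟩ m => ?_⟩
  · have := h (min m u.length)
    rwa [Nat.sub_eq_zero_of_le (min_le_right _ _), List.take_zero, List.count_nil, List.count_nil,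
      Nat.add_zero, Nat.add_zero, ← List.take_eq_take_min] at this
  · simpa [List.take_of_length_le] using h (u.length + m)
  · rcases le_or_gt m u.length with hm | hm
    · simpa [Nat.sub_eq_zero_of_le hm] using hu m
    · simpa [List.take_of_length_le hm.le] using hx (m - u.length)

theorem isHalfWord_append_inv01_iff {u v : List Bool} (hlen : u.length = v.length)
    (htrue : u.count true = v.count true) :
    IsHalfWord (u ++ inv01 v) ↔ IsHalfWord u ∧ IsHalfWord v := by
  have hfalse : u.count false = v.count false := by
    have := u.count_true_add_count_false
    have := v.count_true_add_count_false
    omega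
  have excess (j : ℕ) :
      u.count true + (v.drop j).count false ≤ u.count false + (v.drop j).count true ↔
        (v.take j).count true ≤ (v.take j).count false := by
    have := v.count_take_add_count_drop true j
    have := v.count_take_add_count_drop false j
    omega
  rw [isHalfWord_append_iff, isHalfWord_iff_take_length_sub v]
  simp only [take_inv01, count_inv01, Bool.not_true, Bool.not_false, excess]

/-- The map `(w₁, w₂) ↦ w₁ · w₂⁻¹` is a bijection from ordered pairs of Catalan half-words of
length n with the same number of 1s onto the Catalan words of length 2n. -/
theorem halfword_pairs_bij (n : ℕ) :
    Set.BijOn (fun p : List Bool × List Bool => p.1 ++ inv01 p.2)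
      {p : List Bool × List Bool |
        p.1.length = n ∧ p.2.length = n ∧ IsHalfWord p.1 ∧ IsHalfWord p.2 ∧
          p.1.count true = p.2.count true}
      {w : List Bool | IsCatalanWord n w} := by
  refine ⟨?_, ?_, ?_⟩
  · rintro ⟨u, v⟩ ⟨hu, hv, hwu, hwv, htrue⟩
    dsimp only at hu hv hwu hwv htrue ⊢
    have := v.count_true_add_count_false
    refine ⟨?_, ?_, (isHalfWord_append_inv01_iff (hu.trans hv.symm) htrue).2 ⟨hwu, hwv⟩⟩
    · simp only [List.length_append, length_inv01]
      omega
    · simp only [List.count_append, count_inv01, Bool.not_true]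
      omega
  · rintro ⟨u, v⟩ ⟨hu, -⟩ ⟨u', v'⟩ ⟨hu', -⟩ h
    dsimp only at hu hu' h
    obtain ⟨rfl, hinv⟩ := List.append_inj h (hu.trans hu'.symm)
    rw [inv01_injective hinv]
  · rintro w ⟨hlen, htrue, hw⟩
    have htake : (w.take n).length = n := by rw [List.length_take]; omega
    have hdrop : (w.drop n).length = n := by rw [List.length_drop]; omega
    have hlen' : (w.take n).length = (inv01 (w.drop n)).length := by
      rw [length_inv01, htake, hdrop]
    have htrue' : (w.take n).count true = (inv01 (w.drop n)).count true := by
      have := w.count_take_add_count_drop true n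
      have := (w.drop n).count_true_add_count_false
      rw [count_inv01, Bool.not_true]
      omega
    have hsplit : w.take n ++ inv01 (inv01 (w.drop n)) = w := by
      rw [inv01_inv01, List.take_append_drop]
    rw [← hsplit, isHalfWord_append_inv01_iff hlen' htrue'] at hw
    exact ⟨(w.take n, inv01 (w.drop n)),
      ⟨htake, hlen'.symm.trans htake, hw.1, hw.2, htrue'⟩, hsplit⟩
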